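/- arXiv:1112.6403 — 5 statements merged into one kernel-verified Lean document; each statement's English description precedes it below -/
import Mathlib

section
/- Let G be a compact abelian group with Haar measure m, and A, B ⊆ G measurable with m_*(A + B) < m(A) + m(B). Then the difference set A − B is periodic with period H := H(A+B), i.e., A − B = (A − B) + H. -/
/-!
If `x = a - b ∈ A - B` and `t` is an essential period of `A + B` but `x + t ∉ A - B`, the
translates `(a + t) + B ⊆ t + (A + B)` and `b + A ⊆ A + B` are disjoint, and both lie in
`A + B` up to a null set, so `A + B` would have inner measure at least `μ A + μ B`.
Kneser's theorem is not needed.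
-/

open MeasureTheory Set Pointwise
open scoped ENNReal symmDiff

/-- The inner Haar measure: supremum of measures of compact subsets. -/
noncomputable def innerHaar {G : Type*} [MeasurableSpace G] [TopologicalSpace G]
    (μ : MeasureTheory.Measure G) (S : Set G) : ℝ≥0∞ :=
  ⨆ (E : Set G) (_ : E ⊆ S) (_ : IsCompact E), μ E

section InnerMeasure

variable {X : Type*} [MeasurableSpace X] [TopologicalSpace X] {μ : Measure X}

theorem measure_le_innerHaar [μ.InnerRegular] {C S : Set X} (hC : MeasurableSet C)
    (hCS : C ⊆ S) : μ C ≤ innerHaar μ S := by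
  rw [hC.measure_eq_iSup_isCompact]
  exact iSup₂_le fun K hKC ↦ iSup_le fun hK ↦
    le_iSup_of_le K <| le_iSup_of_le (hKC.trans hCS) <| le_iSup_of_le hK le_rfl

theorem measure_le_innerHaar_of_measure_diff_eq_zero [μ.InnerRegular] {C S : Set X}
    (hC : MeasurableSet C) (hCS : μ (C \ S) = 0) : μ C ≤ innerHaar μ S := by
  set N := toMeasurable μ (C \ S)
  have hN : μ N = 0 := by rwa [measure_toMeasurable]
  calc μ C = μ (C \ N) := (measure_sdiff_null hN).symm
    _ ≤ innerHaar μ S := measure_le_innerHaar (hC.diff (measurableSet_toMeasurable μ _))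
        fun y ⟨hyC, hyN⟩ ↦ by_contra fun hyS ↦ hyN (subset_toMeasurable μ _ ⟨hyC, hyS⟩)

end InnerMeasure

section Translates

variable {G : Type*} [AddCommGroup G]

theorem disjoint_vadd_vadd_iff {x y : G} {A B : Set G} :
    Disjoint (x +ᵥ B) (y +ᵥ A) ↔ x - y ∉ A - B := by
  simp only [disjoint_left, mem_vadd_set, mem_sub, vadd_eq_add, not_exists, not_and]
  constructor
  · rintro hd a ha b hb hab
    refine hd ⟨b, hb, rfl⟩ a ha ?_
    rwa [add_comm, ← sub_eq_sub_iff_add_eq_add]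
  · rintro hxy _ ⟨b, hb, rfl⟩ a ha hab
    refine hxy a ha b hb ?_
    rwa [sub_eq_sub_iff_add_eq_add, add_comm]

theorem vadd_set_subset_vadd_add {a t : G} {A B : Set G} (ha : a ∈ A) :
    (a + t) +ᵥ B ⊆ t +ᵥ (A + B) := by
  rw [add_comm, ← vadd_vadd]
  exact vadd_set_mono (vadd_set_subset_add ha)

end Translates

section Periodic

variable {G : Type*} [AddCommGroup G] [TopologicalSpace G] [MeasurableSpace G]
  [MeasurableAdd G] {μ : Measure G} [μ.IsAddLeftInvariant] [μ.InnerRegular] {A B : Set G}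

theorem add_mem_sub_of_measure_vadd_diff_eq_zero (hA : MeasurableSet A) (hB : MeasurableSet B)
    (h : innerHaar μ (A + B) < μ A + μ B) {t : G}
    (ht : μ ((t +ᵥ (A + B)) \ (A + B)) = 0) {x : G} (hx : x ∈ A - B) : x + t ∈ A - B := by
  obtain ⟨a, ha, b, hb, rfl⟩ := hx
  by_contra hxt
  have hdisj : Disjoint ((a + t) +ᵥ B) (b +ᵥ A) :=
    disjoint_vadd_vadd_iff.2 (by rwa [add_sub_right_comm])
  have hnull : μ ((((a + t) +ᵥ B) ∪ (b +ᵥ A)) \ (A + B)) = 0 := by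
    have hsub : ((a + t) +ᵥ B) ∪ (b +ᵥ A) ⊆ (t +ᵥ (A + B)) ∪ (A + B) :=
      union_subset_union (vadd_set_subset_vadd_add ha) (add_comm B A ▸ vadd_set_subset_add hb)
    exact measure_mono_null ((sdiff_subset_sdiff_left hsub).trans union_sdiff_right.subset) ht
  refine h.not_ge ?_
  calc μ A + μ B = μ (b +ᵥ A) + μ ((a + t) +ᵥ B) := by rw [measure_vadd, measure_vadd]
    _ = μ (((a + t) +ᵥ B) ∪ (b +ᵥ A)) := by rw [measure_union hdisj (hA.const_vadd b), add_comm]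
    _ ≤ innerHaar μ (A + B) := measure_le_innerHaar_of_measure_diff_eq_zero
        ((hB.const_vadd _).union (hA.const_vadd _)) hnull

end Periodic

theorem difference_set_periodic_general
    {G : Type*} [AddCommGroup G] [TopologicalSpace G] [IsTopologicalAddGroup G]
    [CompactSpace G] [MeasurableSpace G] [BorelSpace G]
    (μ : Measure G) [μ.IsAddHaarMeasure]
    (A B : Set G) (hA : MeasurableSet A) (hB : MeasurableSet B)
    (h : innerHaar μ (A + B) < μ A + μ B)
    (H : Set G) (hH : H = {t : G | μ ((t +ᵥ (A + B)) ∆ (A + B)) = 0}) :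
    A - B = (A - B) + H := by
  subst hH
  have h0 : (0 : G) ∈ {t : G | μ ((t +ᵥ (A + B)) ∆ (A + B)) = 0} := by
    show μ _ = 0
    rw [zero_vadd, symmDiff_self, bot_eq_empty, measure_empty]
  refine (subset_add_left _ h0).antisymm (add_subset_iff.2 fun x hx t ht ↦ ?_)
  exact add_mem_sub_of_measure_vadd_diff_eq_zero hA hB h (measure_mono_null le_sup_left ht) hx

theorem difference_set_periodic
    {G : Type*} [AddCommGroup G] [TopologicalSpace G] [IsTopologicalAddGroup G]
    [CompactSpace G] [MeasurableSpace G] [BorelSpace G]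
    (μ : Measure G) [μ.IsAddHaarMeasure] (hμ : μ Set.univ = 1)
    (A B : Set G) (hA : MeasurableSet A) (hB : MeasurableSet B)
    (h : innerHaar μ (A + B) < μ A + μ B)
    (H : Set G) (hH : H = {t : G | μ ((t +ᵥ (A + B)) ∆ (A + B)) = 0}) :
    A - B = (A - B) + H :=
  difference_set_periodic_general μ A B hA hB h H hH
end

section
/- Let G be a compact abelian group with Haar measure m, and A, B ⊆ G measurable sets with m(A) > 0 and m(B) > 0. Then there exist measurable subsets A' ⊆ A and B' ⊆ B with m(A') = m(A) and m(B') = m(B), such that for every t ∈ G, if (A' − t) ∩ B' is nonempty then m((A' − t) ∩ B') > 0. -/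
/-!
Choose neighbourhoods `U n` of `0` such that translating `A` or `B` by any `u ∈ U n` moves at
most `4⁻ⁿ` of its measure. For a measurable `S`, swapping the order of integration gives
`∫_{a ∈ S} μ((a + U) \ S) = ∫_{u ∈ U} μ((u + S) \ S) ≤ 4⁻ⁿ μ(U)`, so by Markov's inequality and
Borel–Cantelli almost every point of `S` is a density point of `S` along `U n`; take `A'` and
`B'` to be the density points. If `a ∈ A'` and `a - t ∈ B'`, then for large `n` more than half of
`a - t + U n` lies in `-t + A` and more than half of it lies in `B`, so `(-t + A) ∩ B` has positive
measure.
-/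

open MeasureTheory Set Filter Topology Pointwise
open scoped ENNReal symmDiff

theorem MeasurableSet.exists_continuous_eqOn_indicator {X : Type*} [TopologicalSpace X]
    [RegularSpace X] [LocallyCompactSpace X] [MeasurableSpace X] [BorelSpace X]
    {μ : Measure X} [μ.OuterRegular] [μ.InnerRegularCompactLTTop]
    {Q : Set X} (hQ : MeasurableSet Q) (hμQ : μ Q ≠ ∞) {δ : ℝ≥0∞} (hδ : δ ≠ 0) :
    ∃ k : X → ℝ≥0∞, Continuous k ∧ (∀ x, k x ≤ 1) ∧
      ∃ D, MeasurableSet D ∧ μ D < δ ∧ EqOn k (Q.indicator 1) Dᶜ := by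
  obtain ⟨K, hKQ, hKc, hKcl, hμK⟩ :=
    hQ.exists_isCompact_isClosed_sdiff_lt hμQ (ENNReal.half_pos hδ).ne'
  obtain ⟨V, hQV, hVo, -, hμV⟩ := hQ.exists_isOpen_sdiff_lt hμQ (ENNReal.half_pos hδ).ne'
  obtain ⟨f, hfK, hfV, -, hf01⟩ := exists_continuous_one_zero_of_isCompact hKc
    hVo.isClosed_compl (disjoint_compl_right_iff_subset.2 (hKQ.trans hQV))
  refine ⟨fun x => ENNReal.ofReal (f x), ENNReal.continuous_ofReal.comp f.continuous,
    fun x => ENNReal.ofReal_le_one.2 (hf01 x).2, V \ K, hVo.measurableSet.diff hKcl.measurableSet,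
    ?_, ?_⟩
  · calc μ (V \ K) ≤ μ (V \ Q) + μ (Q \ K) :=
          (measure_mono (sdiff_triangle V Q K)).trans (measure_union_le _ _)
      _ < δ / 2 + δ / 2 := ENNReal.add_lt_add hμV hμK
      _ = δ := ENNReal.add_halves δ
  · intro x hx
    rw [mem_compl_iff, Set.mem_sdiff, not_and_not_right] at hx
    by_cases hxV : x ∈ V
    · simp [hfK (hx hxV), hKQ (hx hxV)]
    · simp [hfV hxV, indicator_of_notMem fun h => hxV (hQV h)]

section

variable {G : Type*} [AddCommGroup G] [MeasurableSpace G] {μ : Measure G}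

variable (μ) in
def IsDensityPoint (U : ℕ → Set G) (S : Set G) (a : G) : Prop :=
  Tendsto (fun n => μ ((a +ᵥ U n) \ S) / μ (U n)) atTop (𝓝 0)

theorem IsDensityPoint.congr_ae {U : ℕ → Set G} {S T : Set G} {a : G}
    (h : IsDensityPoint μ U S a) (hST : S =ᵐ[μ] T) : IsDensityPoint μ U T a := by
  simpa only [IsDensityPoint, measure_congr ((ae_eq_refl _).diff hST)] using h

theorem IsDensityPoint.measure_neg_vadd_inter_pos [IsFiniteMeasure μ] [μ.IsAddLeftInvariant]
    {U : ℕ → Set G} (hU0 : ∀ n, μ (U n) ≠ 0) {A B : Set G} {t b : G}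
    (hA : IsDensityPoint μ U A (t + b)) (hB : IsDensityPoint μ U B b) :
    0 < μ ((-t +ᵥ A) ∩ B) := by
  have half : ∀ᶠ x : ℝ≥0∞ in 𝓝 0, x < 2⁻¹ := gt_mem_nhds (by norm_num)
  obtain ⟨n, hnA, hnB⟩ := ((hA.eventually half).and (hB.eventually half)).exists
  rw [ENNReal.div_lt_iff (.inl (hU0 n)) (.inl (measure_ne_top μ _))] at hnA hnB
  have hcover : b +ᵥ U n ⊆
      (-t +ᵥ A) ∩ B ∪ (-t +ᵥ (((t + b) +ᵥ U n) \ A)) ∪ ((b +ᵥ U n) \ B) := by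
    rw [vadd_set_sdiff, vadd_vadd, neg_add_cancel_left]
    intro x hx
    by_cases x ∈ -t +ᵥ A <;> by_cases x ∈ B <;> simp_all
  refine pos_iff_ne_zero.2 fun h0 => lt_irrefl (μ (U n)) ?_
  calc μ (U n) = μ (b +ᵥ U n) := (measure_vadd μ b (U n)).symm
    _ ≤ μ ((-t +ᵥ A) ∩ B) + μ (-t +ᵥ (((t + b) +ᵥ U n) \ A)) + μ ((b +ᵥ U n) \ B) :=
        (measure_mono hcover).trans <|
          (measure_union_le _ _).trans (add_le_add_left (measure_union_le _ _) _)
    _ = μ (((t + b) +ᵥ U n) \ A) + μ ((b +ᵥ U n) \ B) := by rw [h0, measure_vadd, zero_add]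
    _ < 2⁻¹ * μ (U n) + 2⁻¹ * μ (U n) := ENNReal.add_lt_add hnA hnB
    _ = μ (U n) := by rw [← add_mul, ENNReal.inv_two_add_inv_two, one_mul]

variable [MeasurableAdd G]

theorem setLIntegral_indicator_add [μ.IsAddLeftInvariant] {Q : Set G} (hQ : MeasurableSet Q)
    (S : Set G) (a : G) :
    ∫⁻ u in S, Q.indicator 1 (a + u) ∂μ = μ ((a +ᵥ S) ∩ Q) := by
  have : (fun u => Q.indicator (1 : G → ℝ≥0∞) (a + u)) = (-a +ᵥ Q).indicator 1 := by
    classical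
    funext u
    simp [Set.indicator_apply, Set.mem_vadd_set_iff_neg_vadd_mem]
  rw [this, lintegral_indicator_one (hQ.const_vadd _), Measure.restrict_apply (hQ.const_vadd _),
    ← measure_vadd μ a, vadd_set_inter, vadd_neg_vadd, inter_comm]

theorem lintegral_lintegral_add_le_add_of_eqOn [μ.IsAddLeftInvariant] {φ ψ : G → ℝ≥0∞}
    (hψ : ∀ x, ψ x ≤ 1) {D : Set G} (hD : MeasurableSet D) (hψφ : EqOn ψ φ Dᶜ) (C S : Set G) :
    ∫⁻ a in C, ∫⁻ u in S, ψ (a + u) ∂μ ∂μ ≤ ∫⁻ a in C, ∫⁻ u in S, φ (a + u) ∂μ ∂μ + μ C * μ D := by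
  have hpt : ∀ x, ψ x ≤ φ x + D.indicator 1 x := fun x => by
    by_cases hx : x ∈ D
    · simpa [hx] using (hψ x).trans le_add_self
    · simp [hx, hψφ hx]
  have hinner : ∀ a, ∫⁻ u in S, ψ (a + u) ∂μ ≤ ∫⁻ u in S, φ (a + u) ∂μ + μ D := fun a =>
    calc ∫⁻ u in S, ψ (a + u) ∂μ ≤ ∫⁻ u in S, φ (a + u) + D.indicator 1 (a + u) ∂μ :=
          lintegral_mono fun u => hpt _
      _ = ∫⁻ u in S, φ (a + u) ∂μ + ∫⁻ u in S, D.indicator 1 (a + u) ∂μ :=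
          lintegral_add_right _ ((measurable_one.indicator hD).comp (measurable_const_add a))
      _ ≤ ∫⁻ u in S, φ (a + u) ∂μ + ∫⁻ u, D.indicator 1 (a + u) ∂μ := by
          gcongr; exact Measure.restrict_le_self
      _ = ∫⁻ u in S, φ (a + u) ∂μ + μ D := by
          rw [lintegral_add_left_eq_self (D.indicator 1), lintegral_indicator_one hD]
  calc ∫⁻ a in C, ∫⁻ u in S, ψ (a + u) ∂μ ∂μ ≤ ∫⁻ a in C, (∫⁻ u in S, φ (a + u) ∂μ + μ D) ∂μ :=
        lintegral_mono hinner
    _ = _ := by rw [lintegral_add_right _ measurable_const, setLIntegral_const, mul_comm]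

end

section

variable {G : Type*} [AddCommGroup G] [TopologicalSpace G] [IsTopologicalAddGroup G]
    [MeasurableSpace G] [BorelSpace G] {μ : Measure G}

theorem lintegral_lintegral_add_comm_of_continuous [CompactSpace G] [SFinite μ]
    {k : G → ℝ≥0∞} (hk : Continuous k) (C S : Set G) :
    ∫⁻ a in C, ∫⁻ u in S, k (a + u) ∂μ ∂μ = ∫⁻ u in S, ∫⁻ a in C, k (u + a) ∂μ ∂μ := by
  have hm : Measurable fun p : G × G => k (p.1 + p.2) :=
    (HasCompactSupport.of_compactSpace _).measurable_of_prod (hk.comp continuous_add)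
  rw [lintegral_lintegral_swap hm.aemeasurable]
  simp_rw [add_comm]

/- Both sides are the product measure of `{(a, u) ∈ C × S | a + u ∉ R}`, but addition need not
be measurable for the product σ-algebra when `G` is not second countable. So Fubini is applied
instead to continuous `k` close to the indicator of `Rᶜ`, for which `(a, u) ↦ k (a + u)` is
product-measurable. -/
theorem lintegral_measure_vadd_sdiff_comm [CompactSpace G] [μ.IsAddHaarMeasure] {R : Set G}
    (hR : MeasurableSet R) (C S : Set G) :
    ∫⁻ a in C, μ ((a +ᵥ S) \ R) ∂μ = ∫⁻ u in S, μ ((u +ᵥ C) \ R) ∂μ := by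
  suffices key : ∀ C S : Set G,
      ∫⁻ a in C, μ ((a +ᵥ S) \ R) ∂μ ≤ ∫⁻ u in S, μ ((u +ᵥ C) \ R) ∂μ from
    le_antisymm (key C S) (key S C)
  intro C S
  simp_rw [sdiff_eq, ← setLIntegral_indicator_add hR.compl]
  refine ENNReal.le_of_forall_pos_le_add fun ε hε _ => ?_
  have hCS : μ C + μ S ≠ ∞ := by finiteness
  obtain ⟨k, hk, hk1, D, hD, hμD, hkD⟩ := hR.compl.exists_continuous_eqOn_indicator
    (measure_ne_top μ _) (δ := ε / (μ C + μ S))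
    (ENNReal.div_pos_iff.2 ⟨ENNReal.coe_ne_zero.2 hε.ne', hCS⟩).ne'
  have hind1 : ∀ x, Rᶜ.indicator (1 : G → ℝ≥0∞) x ≤ 1 :=
    indicator_le_self' fun _ _ => zero_le_one
  calc ∫⁻ a in C, ∫⁻ u in S, Rᶜ.indicator 1 (a + u) ∂μ ∂μ
      ≤ ∫⁻ a in C, ∫⁻ u in S, k (a + u) ∂μ ∂μ + μ C * μ D :=
        lintegral_lintegral_add_le_add_of_eqOn hind1 hD hkD.symm C S
    _ = ∫⁻ u in S, ∫⁻ a in C, k (u + a) ∂μ ∂μ + μ C * μ D := by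
        rw [lintegral_lintegral_add_comm_of_continuous hk]
    _ ≤ ∫⁻ u in S, ∫⁻ a in C, Rᶜ.indicator 1 (u + a) ∂μ ∂μ + μ S * μ D + μ C * μ D := by
        gcongr
        exact lintegral_lintegral_add_le_add_of_eqOn hk1 hD hkD S C
    _ = ∫⁻ u in S, ∫⁻ a in C, Rᶜ.indicator 1 (u + a) ∂μ ∂μ + (μ C + μ S) * μ D := by ring
    _ ≤ _ := by
        gcongr
        rw [mul_comm]
        exact (ENNReal.mul_lt_of_lt_div hμD).le

theorem tendsto_measure_vadd_symmDiff [μ.IsAddLeftInvariant] [IsLocallyFiniteMeasure μ]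
    [μ.InnerRegularCompactLTTop] {U : Set G} (hU : MeasurableSet U) (hμU : μ U ≠ ∞) (b : G) :
    Tendsto (fun a : G => μ ((a +ᵥ U) ∆ (b +ᵥ U))) (𝓝 b) (𝓝 0) := by
  let f : C(G × G, G) := ⟨fun p => -p.1 + p.2, by fun_prop⟩
  have hpre : ∀ a, f.curry a ⁻¹' U = a +ᵥ U := fun a => by
    ext x
    simp [f, mem_vadd_set_iff_neg_vadd_mem]
  simpa only [hpre] using tendsto_measure_symmDiff_preimage_nhds_zero
    (f.curry.continuous.tendsto b) (.of_forall fun a => measurePreserving_add_left μ (-a))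
    (measurePreserving_add_left μ (-b)) hU.nullMeasurableSet hμU

theorem continuous_measure_vadd_sdiff [μ.IsAddLeftInvariant] [IsLocallyFiniteMeasure μ]
    [μ.InnerRegularCompactLTTop] {U : Set G} (hU : MeasurableSet U) (hμU : μ U ≠ ∞)
    (S : Set G) :
    Continuous fun a : G => μ ((a +ᵥ U) \ S) := by
  let T : G → MeasuredSets (μ.restrict Sᶜ) := fun a => ⟨a +ᵥ U, hU.const_vadd a⟩
  have hT : Continuous T := continuous_iff_continuousAt.2 fun b =>
    tendsto_iff_edist_tendsto_0.2 (tendsto_of_tendsto_of_tendsto_of_le_of_le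
      tendsto_const_nhds (tendsto_measure_vadd_symmDiff hU hμU b) (fun _ => zero_le)
      fun a => Measure.restrict_apply_le _ _)
  convert MeasuredSets.continuous_measure.comp hT using 2 with a
  show μ _ = μ.restrict Sᶜ (a +ᵥ U)
  rw [Measure.restrict_apply (hU.const_vadd a), Set.sdiff_eq]

theorem eventually_nhds_zero_measure_vadd_sdiff_le [μ.IsAddLeftInvariant]
    [IsLocallyFiniteMeasure μ] [μ.InnerRegularCompactLTTop] {S : Set G} (hS : MeasurableSet S)
    (hμS : μ S ≠ ∞) {η : ℝ≥0∞} (hη : η ≠ 0) :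
    ∀ᶠ u in 𝓝 (0 : G), μ ((u +ᵥ S) \ S) ≤ η := by
  have h := tendsto_measure_vadd_symmDiff hS hμS 0
  rw [zero_vadd] at h
  filter_upwards [ENNReal.tendsto_nhds_zero.1 h η (pos_iff_ne_zero.2 hη)] with u hu
  exact (measure_mono (symmDiff_def (u +ᵥ S) S ▸ subset_union_left)).trans hu

theorem mul_measure_le_of_measure_vadd_sdiff_le [CompactSpace G] [μ.IsAddHaarMeasure]
    {S U : Set G} (hS : MeasurableSet S) (hU : MeasurableSet U) {η : ℝ≥0∞}
    (hUS : ∀ u ∈ U, μ ((u +ᵥ S) \ S) ≤ η) (c : ℝ≥0∞) :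
    c * μ ({a | c ≤ μ ((a +ᵥ U) \ S)} ∩ S) ≤ η * μ U :=
  calc c * μ ({a | c ≤ μ ((a +ᵥ U) \ S)} ∩ S)
      = c * μ.restrict S {a | c ≤ μ ((a +ᵥ U) \ S)} := by rw [Measure.restrict_apply' hS]
    _ ≤ ∫⁻ a in S, μ ((a +ᵥ U) \ S) ∂μ :=
        mul_meas_ge_le_lintegral₀
          (continuous_measure_vadd_sdiff hU (measure_ne_top μ U) S).measurable.aemeasurable c
    _ = ∫⁻ u in U, μ ((u +ᵥ S) \ S) ∂μ := lintegral_measure_vadd_sdiff_comm hS S U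
    _ ≤ ∫⁻ _ in U, η ∂μ := setLIntegral_mono measurable_const hUS
    _ = η * μ U := setLIntegral_const U η

theorem ae_isDensityPoint [CompactSpace G] [μ.IsAddHaarMeasure] {S : Set G}
    (hS : MeasurableSet S) {U : ℕ → Set G} (hUm : ∀ n, MeasurableSet (U n))
    (hU0 : ∀ n, μ (U n) ≠ 0) {ε : ℕ → ℝ≥0∞} (hε0 : ∀ n, ε n ≠ 0) (hε : ∑' n, ε n ≠ ∞)
    (hUS : ∀ n, ∀ u ∈ U n, μ ((u +ᵥ S) \ S) ≤ ε n * ε n) :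
    ∀ᵐ a ∂μ, a ∈ S → IsDensityPoint μ U S a := by
  set bad : ℕ → Set G := fun n => {a | ε n * μ (U n) ≤ μ ((a +ᵥ U n) \ S)} ∩ S
  have hbad : ∀ n, μ (bad n) ≤ ε n := fun n => by
    have h := mul_measure_le_of_measure_vadd_sdiff_le hS (hUm n) (hUS n) (ε n * μ (U n))
    rw [mul_right_comm (ε n) (ε n)] at h
    exact (ENNReal.mul_le_mul_iff_right (mul_ne_zero (hε0 n) (hU0 n))
      (ENNReal.mul_ne_top (ENNReal.ne_top_of_tsum_ne_top hε n) (measure_ne_top μ _))).1 h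
  filter_upwards [ae_eventually_notMem (ne_top_of_le_ne_top hε (ENNReal.tsum_le_tsum hbad))]
    with a ha haS
  refine tendsto_of_tendsto_of_tendsto_of_le_of_le' tendsto_const_nhds
    (ENNReal.tendsto_atTop_zero_of_tsum_ne_top hε) (.of_forall fun _ => zero_le) ?_
  filter_upwards [ha] with n hn
  exact ENNReal.div_le_of_le_mul (not_le.1 fun h => hn ⟨h, haS⟩).le

end

theorem MeasurableSet.exists_subset_ae_eq_forall {α : Type*} [MeasurableSpace α]
    {μ : Measure α} {S : Set α} {p : α → Prop} (hS : MeasurableSet S)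
    (h : ∀ᵐ a ∂μ, a ∈ S → p a) :
    ∃ S' ⊆ S, MeasurableSet S' ∧ S' =ᵐ[μ] S ∧ ∀ a ∈ S', p a := by
  set N := toMeasurable μ {a | ¬(a ∈ S → p a)}
  refine ⟨S \ N, sdiff_subset, hS.diff (measurableSet_toMeasurable _ _), ?_, ?_⟩
  · exact sdiff_null_ae_eq_self (by rw [measure_toMeasurable]; exact ae_iff.1 h)
  · rintro a ⟨haS, haN⟩
    by_contra hpa
    exact haN (subset_toMeasurable _ _ fun h => hpa (h haS))

theorem full_measure_subsets_with_positive_intersections_general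
    {G : Type*} [AddCommGroup G] [TopologicalSpace G] [IsTopologicalAddGroup G]
    [CompactSpace G] [MeasurableSpace G] [BorelSpace G]
    (μ : Measure G) [μ.IsAddHaarMeasure]
    (A B : Set G) (hA : MeasurableSet A) (hB : MeasurableSet B) :
    ∃ A' B' : Set G, MeasurableSet A' ∧ MeasurableSet B' ∧ A' ⊆ A ∧ B' ⊆ B ∧
      μ A' = μ A ∧ μ B' = μ B ∧
      ∀ t : G, (((-t) +ᵥ A') ∩ B').Nonempty → 0 < μ (((-t) +ᵥ A') ∩ B') := by
  set ε : ℕ → ℝ≥0∞ := fun n => 2⁻¹ ^ n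
  have hε0 : ∀ n, ε n ≠ 0 := fun n => by simp [ε]
  have hε : ∑' n, ε n ≠ ∞ := by simp [ε, ENNReal.tsum_geometric, ENNReal.one_sub_inv_two]
  choose U hUAB hUo hU0 using fun n => eventually_nhds_iff.1
    ((eventually_nhds_zero_measure_vadd_sdiff_le hA (measure_ne_top μ A)
      (mul_ne_zero (hε0 n) (hε0 n))).and
      (eventually_nhds_zero_measure_vadd_sdiff_le hB (measure_ne_top μ B)
        (mul_ne_zero (hε0 n) (hε0 n))))
  have hUm : ∀ n, MeasurableSet (U n) := fun n => (hUo n).measurableSet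
  have hUpos : ∀ n, μ (U n) ≠ 0 := fun n => (hUo n).measure_ne_zero μ ⟨0, hU0 n⟩
  obtain ⟨A', hA'A, hA'm, hA'ae, hA'd⟩ :=
    hA.exists_subset_ae_eq_forall
      (ae_isDensityPoint hA hUm hUpos hε0 hε fun n u hu => (hUAB n u hu).1)
  obtain ⟨B', hB'B, hB'm, hB'ae, hB'd⟩ :=
    hB.exists_subset_ae_eq_forall
      (ae_isDensityPoint hB hUm hUpos hε0 hε fun n u hu => (hUAB n u hu).2)
  refine ⟨A', B', hA'm, hB'm, hA'A, hB'B, measure_congr hA'ae, measure_congr hB'ae, ?_⟩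
  rintro t ⟨b, hbA, hbB⟩
  rw [mem_vadd_set_iff_neg_vadd_mem, neg_neg, vadd_eq_add] at hbA
  exact ((hA'd _ hbA).congr_ae hA'ae.symm).measure_neg_vadd_inter_pos hUpos
    ((hB'd b hbB).congr_ae hB'ae.symm)

theorem full_measure_subsets_with_positive_intersections
    {G : Type*} [AddCommGroup G] [TopologicalSpace G] [IsTopologicalAddGroup G]
    [CompactSpace G] [MeasurableSpace G] [BorelSpace G]
    (μ : Measure G) [μ.IsAddHaarMeasure] (hμ : μ Set.univ = 1)
    (A B : Set G) (hA : MeasurableSet A) (hB : MeasurableSet B)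
    (hA0 : 0 < μ A) (hB0 : 0 < μ B) :
    ∃ A' B' : Set G, MeasurableSet A' ∧ MeasurableSet B' ∧ A' ⊆ A ∧ B' ⊆ B ∧
      μ A' = μ A ∧ μ B' = μ B ∧
      ∀ t : G, (((-t) +ᵥ A') ∩ B').Nonempty → 0 < μ (((-t) +ᵥ A') ∩ B') :=
  full_measure_subsets_with_positive_intersections_general μ A B hA hB
end

section
/- Let G be a compact abelian group with Haar measure m, K ≤ G a compact open subgroup, and suppose A = A_1 ∪ A_0, B = B_1 ∪ B_0 is a decomposition satisfying: m((A_1+K) Δ A_1) = 0, m((B_1+K) Δ B_1) = 0, A_0 and B_0 are contained in cosets of K with (A_1+K) ∩ A_0 = (B_1+K) ∩ B_0 = ∅, A_0 + B_0 + K is a unique expression element of A + B + K in G/K, m_*(A_0+B_0) = m(A_0) + m(B_0), and m_*(A+B) = m(A) + m(B). Then m(A + B + K) = m(A + K) + m(B + K) − m(K). -/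
/-!
Work in the finite quotient `G ⧸ K`. There the unique expression `a₀ + b₀` forces `A₀` and `B₀`
to lie over single points and keeps the coset `C = A₀ + B₀ + K` disjoint from the open set
`P = (A₁ + B + K) ∪ (A + B₁ + K)`, so `m(A + B + K) = m(P) + m(K)`. Since `A₁ + K` and `B₁ + K`
differ from `A₁` and `B₁` by null sets and only countably many translates are involved, `P` lies
in `A + B` up to a null set, while `A + B ⊆ P ∪ (A₀ + B₀)`; inner regularity then splits
`m_*(A + B) = m(P) + m_*(A₀ + B₀)`. The two inner-measure hypotheses give
`m(P) = m(A₁) + m(B₁)`, and `m(A + K) = m(A₁) + m(K)`, `m(B + K) = m(B₁) + m(K)`.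
-/

open MeasureTheory Set Pointwise
open scoped ENNReal symmDiff

namespace QuotientAddGroup

variable {G : Type*} [AddGroup G] {K : AddSubgroup G}

theorem vadd_coe_eq_preimage_mk (x : G) : x +ᵥ (K : Set G) = mk ⁻¹' {(x : G ⧸ K)} := by
  ext y
  simp [mem_leftAddCoset_iff, QuotientAddGroup.eq, eq_comm]

theorem vadd_coe_eq_vadd_coe_iff {x y : G} :
    x +ᵥ (K : Set G) = y +ᵥ (K : Set G) ↔ (x : G ⧸ K) = y := by
  rw [leftAddCoset_eq_iff, QuotientAddGroup.eq]

theorem image_mk_eq_singleton_iff {S : Set G} {x : G} :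
    (mk '' S : Set (G ⧸ K)) = {(x : G ⧸ K)} ↔ S + (K : Set G) = x +ᵥ (K : Set G) := by
  rw [← preimage_image_mk_eq_add, vadd_coe_eq_preimage_mk,
    (preimage_injective.2 mk_surjective).eq_iff]

theorem disjoint_image_mk_iff {S T : Set G} :
    Disjoint (mk '' S : Set (G ⧸ K)) (mk '' T) ↔ Disjoint (S + (K : Set G)) T := by
  rw [← subset_compl_iff_disjoint_left, image_subset_iff, preimage_compl,
    subset_compl_iff_disjoint_left, preimage_image_mk_eq_add]

theorem disjoint_add_coe_add_coe {S T : Set G} (h : Disjoint (S + (K : Set G)) T) :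
    Disjoint (S + (K : Set G)) (T + K) := by
  simpa only [preimage_image_mk_eq_add] using (disjoint_image_mk_iff.2 h).preimage mk

theorem exists_countable_subset_subset_add_coe [Countable (G ⧸ K)] (T : Set G) :
    ∃ F ⊆ T, F.Countable ∧ T ⊆ F + (K : Set G) := by
  obtain ⟨F, hFT, hF⟩ := exists_subset_bijOn T (mk : G → G ⧸ K)
  refine ⟨F, hFT, hF.mapsTo.countable_of_injOn hF.injOn (to_countable _), ?_⟩
  rw [← preimage_image_mk_eq_add]
  exact (subset_preimage_image _ _).trans (preimage_mono hF.surjOn)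

end QuotientAddGroup

theorem Set.union_add_union_eq {M : Type*} [Add M] (A1 A0 B1 B0 : Set M) :
    (A1 ∪ A0) + (B1 ∪ B0) = A1 + (B1 ∪ B0) ∪ ((A1 ∪ A0) + B1) ∪ (A0 + B0) := by
  simp only [union_add, add_union]
  ext
  simp only [mem_union]
  tauto

def IsUniqueAdd {Q : Type*} [Add Q] (X Y : Set Q) (x y : Q) : Prop :=
  ∀ a ∈ X, ∀ b ∈ Y, a + b = x + y → a = x ∧ b = y

namespace IsUniqueAdd

variable {Q : Type*} [Add Q] {X Y X' Y' : Set Q} {x y : Q}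

theorem eq_singleton_of_add_eq (h : IsUniqueAdd X Y x y) (hX : X' ⊆ X) (hY : Y' ⊆ Y)
    (h' : X' + Y' = {x + y}) : X' = {x} ∧ Y' = {y} := by
  have hsum (a : Q) (ha : a ∈ X') (b : Q) (hb : b ∈ Y') : a = x ∧ b = y :=
    h a (hX ha) b (hY hb) (mem_singleton_iff.1 (h' ▸ add_mem_add ha hb))
  have hne : (X' + Y').Nonempty := h' ▸ singleton_nonempty _
  obtain ⟨a, ha⟩ := hne.of_add_left
  obtain ⟨b, hb⟩ := hne.of_add_right
  exact ⟨hne.of_add_left.subset_singleton_iff.1 fun a' ha' ↦ (hsum a' ha' b hb).1,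
    hne.of_add_right.subset_singleton_iff.1 fun b' hb' ↦ (hsum a ha b' hb').2⟩

theorem add_notMem_add_left (h : IsUniqueAdd X Y x y) (hX : X' ⊆ X) (hx : x ∉ X') :
    x + y ∉ X' + Y := by
  rintro ⟨a, ha, b, hb, hab⟩
  exact hx ((h a (hX ha) b hb hab).1 ▸ ha)

theorem add_notMem_add_right (h : IsUniqueAdd X Y x y) (hY : Y' ⊆ Y) (hy : y ∉ Y') :
    x + y ∉ X + Y' := by
  rintro ⟨a, ha, b, hb, hab⟩
  exact hy ((h a ha b (hY hb) hab).2 ▸ hb)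

end IsUniqueAdd

section UniqueCoset

open QuotientAddGroup

variable {G : Type*} [AddCommGroup G] {K : AddSubgroup G}

theorem isUniqueAdd_image_mk {A B : Set G} {a0 b0 : G}
    (h : ∀ a ∈ A, ∀ b ∈ B, (a + b) +ᵥ (K : Set G) = (a0 + b0) +ᵥ (K : Set G) →
      a +ᵥ (K : Set G) = a0 +ᵥ (K : Set G) ∧ b +ᵥ (K : Set G) = b0 +ᵥ (K : Set G)) :
    IsUniqueAdd (mk '' A : Set (G ⧸ K)) (mk '' B) a0 b0 := by
  rintro _ ⟨a, ha, rfl⟩ _ ⟨b, hb, rfl⟩ hab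
  simpa only [vadd_coe_eq_vadd_coe_iff] using
    h a ha b hb (by rw [vadd_coe_eq_vadd_coe_iff]; exact_mod_cast hab)

theorem image_mk_add (S T : Set G) : (mk '' (S + T) : Set (G ⧸ K)) = mk '' S + mk '' T :=
  image_add (mk' K)

theorem mk_notMem_image_of_disjoint {S1 S0 : Set G} {x : G} (h : Disjoint (S1 + (K : Set G)) S0)
    (h0 : (mk '' S0 : Set (G ⧸ K)) = {(x : G ⧸ K)}) : (x : G ⧸ K) ∉ mk '' S1 :=
  fun hx ↦ disjoint_left.1 (disjoint_image_mk_iff.2 h) hx (h0 ▸ rfl)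

theorem disjoint_add_vadd_of_isUniqueAdd {A B A1 B1 : Set G} {a0 b0 : G}
    (hU : IsUniqueAdd (mk '' A : Set (G ⧸ K)) (mk '' B) a0 b0) (hA1 : A1 ⊆ A) (hB1 : B1 ⊆ B)
    (ha0 : (a0 : G ⧸ K) ∉ mk '' A1) (hb0 : (b0 : G ⧸ K) ∉ mk '' B1) :
    Disjoint (A1 + B + (K : Set G) ∪ (A + B1 + K)) ((a0 + b0) +ᵥ (K : Set G)) := by
  rw [vadd_coe_eq_preimage_mk, ← preimage_image_mk_eq_add, ← preimage_image_mk_eq_add,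
    ← preimage_union, image_mk_add, image_mk_add]
  refine Disjoint.preimage _ (disjoint_singleton_right.2 ?_)
  rw [mk_add]
  exact not_or.2 ⟨hU.add_notMem_add_left (image_mono hA1) ha0,
    hU.add_notMem_add_right (image_mono hB1) hb0⟩

end UniqueCoset

section InnerHaar

variable {X : Type*} [TopologicalSpace X] [MeasurableSpace X] (μ : Measure X)

theorem le_innerHaar {E S : Set X} (hES : E ⊆ S) (hE : IsCompact E) : μ E ≤ innerHaar μ S :=
  le_iSup₂_of_le E hES (le_iSup_of_le hE le_rfl)

theorem innerHaar_add_innerHaar_le {S T : Set X} {a : ℝ≥0∞}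
    (h : ∀ E ⊆ S, IsCompact E → ∀ F ⊆ T, IsCompact F → μ E + μ F ≤ a) :
    innerHaar μ S + innerHaar μ T ≤ a := by
  simpa only [innerHaar, iSup_and] using
    ENNReal.biSup_add_biSup_le' (f := μ) (g := μ) (p := fun E ↦ E ⊆ S ∧ IsCompact E)
      (q := fun F ↦ F ⊆ T ∧ IsCompact F) ⟨∅, empty_subset _, isCompact_empty⟩
      ⟨∅, empty_subset _, isCompact_empty⟩ fun E hE F hF ↦ h E hE.1 hE.2 F hF.1 hF.2

theorem innerHaar_eq_measure [μ.InnerRegularCompactLTTop] {S : Set X} (hS : MeasurableSet S)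
    (hμS : μ S ≠ ∞) : innerHaar μ S = μ S :=
  (hS.measure_eq_iSup_isCompact_of_ne_top hμS).symm

theorem innerHaar_eq_measure_add_innerHaar [OpensMeasurableSpace X] [IsFiniteMeasure μ]
    [μ.InnerRegularCompactLTTop] {U S T : Set X} (hU : IsOpen U) (hSU : S ⊆ U ∪ T)
    (hTS : T ⊆ S) (hUT : Disjoint U T) (hUS : U ≤ᵐ[μ] S) :
    innerHaar μ S = μ U + innerHaar μ T := by
  apply le_antisymm
  · refine iSup₂_le fun E hES ↦ iSup_le fun hE ↦ ?_
    calc μ E = μ (E ∩ U) + μ (E \ U) := (measure_inter_add_sdiff E hU.measurableSet).symm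
      _ ≤ μ U + innerHaar μ T := add_le_add (measure_mono inter_subset_right)
          (le_innerHaar μ (fun x hx ↦ (hSU (hES hx.1)).resolve_left hx.2) (hE.diff hU))
  · set W := U \ toMeasurable μ (U \ S)
    have hWS : W ⊆ S := fun x hx ↦
      by_contra fun hxS ↦ hx.2 (subset_toMeasurable _ _ ⟨hx.1, hxS⟩)
    have hW : μ W = μ U :=
      measure_sdiff_null (by rw [measure_toMeasurable, ← ae_le_set]; exact hUS)
    rw [← hW, ← innerHaar_eq_measure μ (hU.measurableSet.diff (measurableSet_toMeasurable _ _))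
      (measure_ne_top _ _)]
    refine innerHaar_add_innerHaar_le μ fun E hEW hE F hFT hF ↦ ?_
    have hEU : E ⊆ U := hEW.trans sdiff_subset
    have hFU : Disjoint F U := (hUT.mono_right hFT).symm
    calc μ E + μ F = μ (E ∪ F) := by
          rw [← measure_inter_add_sdiff (E ∪ F) hU.measurableSet, union_inter_distrib_right,
            inter_eq_left.2 hEU, hFU.inter_eq, union_empty, union_sdiff_distrib,
            sdiff_eq_empty.2 hEU, empty_union, hFU.sdiff_eq_left]
      _ ≤ innerHaar μ S := le_innerHaar μ (union_subset (hEW.trans hWS) (hFT.trans hTS))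
          (hE.union hF)

end InnerHaar

section CosetMeasure

variable {G : Type*} [AddCommGroup G] [MeasurableSpace G] (μ : Measure G) [μ.IsAddLeftInvariant]
  {K : AddSubgroup G}

theorem add_add_coe_ae_eq [Countable (G ⧸ K)] {S : Set G} (hS : S + (K : Set G) =ᵐ[μ] S)
    (T : Set G) : S + T + (K : Set G) =ᵐ[μ] S + T := by
  refine ae_eq_set.2
    ⟨?_, by rw [sdiff_eq_empty.2 (subset_add_left _ K.zero_mem), measure_empty]⟩
  obtain ⟨F, hFT, hF, hTF⟩ := QuotientAddGroup.exists_countable_subset_subset_add_coe (K := K) T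
  refine measure_mono_null (t := ⋃ t ∈ F, t +ᵥ ((S + (K : Set G)) \ S)) ?_
    ((measure_biUnion_null_iff hF).2 fun t _ ↦ by rw [measure_vadd]; exact (ae_eq_set.1 hS).1)
  rintro _ ⟨⟨_, ⟨s, hs, t, ht, rfl⟩, k, hk, rfl⟩, hx⟩
  obtain ⟨t', ht', k', hk', rfl⟩ := hTF ht
  beta_reduce at hx ⊢
  refine mem_iUnion₂.2 ⟨t', ht', s + k' + k,
    ⟨⟨s, hs, k' + k, K.add_mem hk' hk, (add_assoc ..).symm⟩,
      fun h ↦ hx ⟨_, h, t', hFT ht', by beta_reduce; abel⟩⟩,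
    by simp only [vadd_eq_add]; abel⟩

theorem measure_union_add_coe [MeasurableAdd G] {S1 S0 : Set G} {x : G}
    (hK : MeasurableSet (K : Set G)) (h1 : S1 + (K : Set G) =ᵐ[μ] S1)
    (h0 : S0 + (K : Set G) = x +ᵥ (K : Set G)) (hdisj : Disjoint (S1 + (K : Set G)) S0) :
    μ ((S1 ∪ S0) + (K : Set G)) = μ S1 + μ (K : Set G) := by
  rw [union_add, measure_union (QuotientAddGroup.disjoint_add_coe_add_coe hdisj)
    (h0 ▸ hK.const_vadd x), h0, measure_vadd, measure_congr h1]

theorem innerHaar_union_add_union [TopologicalSpace G] [IsTopologicalAddGroup G] [BorelSpace G]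
    [IsFiniteMeasure μ] [μ.InnerRegularCompactLTTop] [Countable (G ⧸ K)]
    (hK : IsOpen (K : Set G)) {A1 A0 B1 B0 : Set G} (hA1 : A1 + (K : Set G) =ᵐ[μ] A1)
    (hB1 : B1 + (K : Set G) =ᵐ[μ] B1)
    (hdisj : Disjoint (A1 + (B1 ∪ B0) + (K : Set G) ∪ ((A1 ∪ A0) + B1 + K)) (A0 + B0 + K)) :
    innerHaar μ ((A1 ∪ A0) + (B1 ∪ B0)) =
      μ (A1 + (B1 ∪ B0) + (K : Set G) ∪ ((A1 ∪ A0) + B1 + K)) + innerHaar μ (A0 + B0) := by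
  have hAB := union_add_union_eq A1 A0 B1 B0
  refine innerHaar_eq_measure_add_innerHaar μ (hK.add_left.union hK.add_left) ?_
    (add_subset_add subset_union_right subset_union_right)
    (hdisj.mono_right (subset_add_left _ K.zero_mem)) ?_
  · rw [hAB]
    exact union_subset_union_left _ (union_subset_union (subset_add_left _ K.zero_mem)
      (subset_add_left _ K.zero_mem))
  · refine ((add_add_coe_ae_eq μ hA1 _).union (add_comm B1 (A1 ∪ A0) ▸
      add_add_coe_ae_eq μ hB1 _)).le.trans (Filter.Eventually.of_forall ?_)
    rw [hAB]
    exact subset_union_left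

end CosetMeasure

theorem QP_four_general
    {G : Type*} [AddCommGroup G] [TopologicalSpace G] [IsTopologicalAddGroup G]
    [CompactSpace G] [MeasurableSpace G] [BorelSpace G]
    (μ : Measure G) [μ.IsAddHaarMeasure]
    (K : AddSubgroup G) (hKo : IsOpen (K : Set G))
    (A B A1 A0 B1 B0 : Set G)
    (hmA0 : MeasurableSet A0) (hmB0 : MeasurableSet B0)
    (hAdec : A = A1 ∪ A0) (hBdec : B = B1 ∪ B0)
    (hA1 : μ ((A1 + (K : Set G)) ∆ A1) = 0) (hB1 : μ ((B1 + (K : Set G)) ∆ B1) = 0)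
    (hA1A0 : (A1 + (K : Set G)) ∩ A0 = ∅) (hB1B0 : (B1 + (K : Set G)) ∩ B0 = ∅)
    (huee : ∃ a0 ∈ A, ∃ b0 ∈ B,
      A0 + B0 + (K : Set G) = (a0 + b0) +ᵥ (K : Set G) ∧
      ∀ a ∈ A, ∀ b ∈ B, (a + b) +ᵥ (K : Set G) = A0 + B0 + (K : Set G) →
        a +ᵥ (K : Set G) = a0 +ᵥ (K : Set G) ∧ b +ᵥ (K : Set G) = b0 +ᵥ (K : Set G))
    (h0 : innerHaar μ (A0 + B0) = μ A0 + μ B0)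
    (hsur : innerHaar μ (A + B) = μ A + μ B) :
    μ (A + B + (K : Set G)) = μ (A + (K : Set G)) + μ (B + (K : Set G)) - μ (K : Set G) := by
  open QuotientAddGroup in
  have := K.quotient_finite_of_isOpen hKo
  subst hAdec hBdec
  obtain ⟨a0, -, b0, -, hC, huniq⟩ := huee
  rw [measure_symmDiff_eq_zero_iff] at hA1 hB1
  rw [← disjoint_iff_inter_eq_empty] at hA1A0 hB1B0
  have hU := isUniqueAdd_image_mk (K := K) (hC ▸ huniq)
  obtain ⟨hA0, hB0⟩ := hU.eq_singleton_of_add_eq (image_mono subset_union_right)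
    (image_mono subset_union_right)
    (by rw [← image_mk_add, ← mk_add, image_mk_eq_singleton_iff, hC])
  have hPC := disjoint_add_vadd_of_isUniqueAdd hU subset_union_left subset_union_left
    (mk_notMem_image_of_disjoint hA1A0 hA0) (mk_notMem_image_of_disjoint hB1B0 hB0)
  have hsum := innerHaar_union_add_union μ hKo hA1 hB1 (hC ▸ hPC)
  rw [hsur, h0, measure_union (hA1A0.mono_left (subset_add_left _ K.zero_mem)) hmA0,
    measure_union (hB1B0.mono_left (subset_add_left _ K.zero_mem)) hmB0,
    add_add_add_comm] at hsum
  have hP := (ENNReal.add_left_inj (by finiteness)).1 hsum.symm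
  have hK := hKo.measurableSet
  rw [union_add_union_eq, union_add, union_add, hC, measure_union hPC (hK.const_vadd _),
    measure_vadd, hP, measure_union_add_coe μ hK hA1 (image_mk_eq_singleton_iff.1 hA0) hA1A0,
    measure_union_add_coe μ hK hB1 (image_mk_eq_singleton_iff.1 hB0) hB1B0, ← add_assoc,
    ENNReal.add_sub_cancel_right (by finiteness), add_right_comm]

theorem QP_four
    {G : Type*} [AddCommGroup G] [TopologicalSpace G] [IsTopologicalAddGroup G]
    [CompactSpace G] [MeasurableSpace G] [BorelSpace G]
    (μ : Measure G) [μ.IsAddHaarMeasure] (hμ : μ Set.univ = 1)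
    (K : AddSubgroup G) (hKc : IsCompact (K : Set G)) (hKo : IsOpen (K : Set G))
    (A B A1 A0 B1 B0 : Set G)
    (hmA : MeasurableSet A) (hmB : MeasurableSet B)
    (hmA0 : MeasurableSet A0) (hmB0 : MeasurableSet B0)
    (hAdec : A = A1 ∪ A0) (hBdec : B = B1 ∪ B0)
    (hA1 : μ ((A1 + (K : Set G)) ∆ A1) = 0) (hB1 : μ ((B1 + (K : Set G)) ∆ B1) = 0)
    (hA0c : ∃ x : G, A0 ⊆ x +ᵥ (K : Set G)) (hB0c : ∃ x : G, B0 ⊆ x +ᵥ (K : Set G))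
    (hA1A0 : (A1 + (K : Set G)) ∩ A0 = ∅) (hB1B0 : (B1 + (K : Set G)) ∩ B0 = ∅)
    (huee : ∃ a0 ∈ A, ∃ b0 ∈ B,
      A0 + B0 + (K : Set G) = (a0 + b0) +ᵥ (K : Set G) ∧
      ∀ a ∈ A, ∀ b ∈ B, (a + b) +ᵥ (K : Set G) = A0 + B0 + (K : Set G) →
        a +ᵥ (K : Set G) = a0 +ᵥ (K : Set G) ∧ b +ᵥ (K : Set G) = b0 +ᵥ (K : Set G))
    (h0 : innerHaar μ (A0 + B0) = μ A0 + μ B0)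
    (hsur : innerHaar μ (A + B) = μ A + μ B) :
    μ (A + B + (K : Set G)) = μ (A + (K : Set G)) + μ (B + (K : Set G)) - μ (K : Set G) :=
  QP_four_general μ K hKo A B A1 A0 B1 B0 hmA0 hmB0 hAdec hBdec hA1 hB1 hA1A0 hB1B0 huee h0 hsur
end

section
/- Let G be a compact abelian group with Haar measure m, and suppose (A, B) is a pair of measurable sets such that for every ε > 0 there is a compact open subgroup K with 0 < m(K) < ε and a quasi-periodic decomposition of A with respect to K (A = A_1 ∪ A_0 with m((A_1+K) Δ A_1) = 0 and A_0 contained in a coset of K). Then A is essentially regular: m(A) = m(closure(A)) = m(interior(closure(A))). -/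
/-!
For an open subgroup `K`, the set `A + K` is open and contains `closure A`. If `A = A₁ ∪ A₀` is
quasi-periodic, then `A₁ + K` has the measure of `A₁`, so `A₁ + K ⊆ closure A₁` (an open set
missing `closure A₁` would be a nonempty open null set), and `A₀ + K` lies in a single coset.
Hence `μ (closure A) ≤ μ A + μ K` and `μ A ≤ μ (interior (closure A)) + μ K`; let `μ K → 0`.
-/

open MeasureTheory Set Pointwise
open scoped ENNReal symmDiff

theorem IsOpen.subset_closure_of_measure_diff_eq_zero {X : Type*} [TopologicalSpace X]
    [MeasurableSpace X] {μ : Measure X} [μ.IsOpenPosMeasure] {U s : Set X} (hU : IsOpen U)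
    (h : μ (U \ s) = 0) : U ⊆ closure s := by
  have hnull : μ (U \ closure s) = 0 :=
    measure_mono_null (sdiff_subset_sdiff_right subset_closure) h
  exact sdiff_eq_empty.1 <| ((hU.sdiff isClosed_closure).measure_eq_zero_iff μ).1 hnull

theorem closure_subset_add_of_isOpen_addSubgroup {G : Type*} [TopologicalSpace G] [AddGroup G]
    [SeparatelyContinuousAdd G] {K : AddSubgroup G} (hK : IsOpen (K : Set G)) (s : Set G) :
    closure s ⊆ s + (K : Set G) :=
  closure_subset_add_right_of_mem_nhds_zero_of_neg s (hK.mem_nhds K.zero_mem) fun _ ↦ K.neg_mem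

/-- `A = A₁ ∪ A₀`, where `A₁` is a union of cosets of `K` up to a null set and `A₀` lies in one
coset. -/
structure IsQuasiPeriodicDecomposition {G : Type*} [AddGroup G] [MeasurableSpace G]
    (μ : Measure G) (K : AddSubgroup G) (A A₁ A₀ : Set G) : Prop where
  eq_union : A = A₁ ∪ A₀
  measure_add_symmDiff : μ ((A₁ + (K : Set G)) ∆ A₁) = 0
  exists_subset_vadd : ∃ x : G, A₀ ⊆ x +ᵥ (K : Set G)

namespace IsQuasiPeriodicDecomposition

variable {G : Type*} [AddGroup G] [MeasurableSpace G] {μ : Measure G} {K : AddSubgroup G}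
  {A A₁ A₀ : Set G}

theorem measure_add_diff_eq_zero (hd : IsQuasiPeriodicDecomposition μ K A A₁ A₀) :
    μ ((A₁ + (K : Set G)) \ A₁) = 0 :=
  measure_mono_null (by rw [symmDiff_def]; exact subset_union_left) hd.measure_add_symmDiff

theorem measure_add_le (hd : IsQuasiPeriodicDecomposition μ K A A₁ A₀) :
    μ (A₁ + (K : Set G)) ≤ μ A₁ :=
  measure_mono_ae (ae_le_set.2 hd.measure_add_diff_eq_zero)

theorem measure_add_le_measure_subgroup [VAddInvariantMeasure G G μ]
    (hd : IsQuasiPeriodicDecomposition μ K A A₁ A₀) : μ (A₀ + (K : Set G)) ≤ μ K := by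
  obtain ⟨x, hx⟩ := hd.exists_subset_vadd
  have hsub : A₀ + (K : Set G) ⊆ x +ᵥ (K : Set G) := by
    rintro _ ⟨a, ha, k, hk, rfl⟩
    obtain ⟨k', hk', rfl⟩ := hx ha
    exact ⟨k' + k, K.add_mem hk' hk, (add_assoc x k' k).symm⟩
  exact (measure_mono hsub).trans_eq (measure_vadd μ x _)

theorem measure_le_measure_subgroup [VAddInvariantMeasure G G μ]
    (hd : IsQuasiPeriodicDecomposition μ K A A₁ A₀) : μ A₀ ≤ μ K :=
  (measure_mono (subset_add_left A₀ K.zero_mem)).trans hd.measure_add_le_measure_subgroup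

variable [TopologicalSpace G] [ContinuousAdd G]

theorem measure_closure_le_add [VAddInvariantMeasure G G μ]
    (hd : IsQuasiPeriodicDecomposition μ K A A₁ A₀) (hK : IsOpen (K : Set G)) :
    μ (closure A) ≤ μ A + μ K :=
  calc μ (closure A) ≤ μ (A₁ + (K : Set G) ∪ (A₀ + K)) := by
        rw [← union_add, ← hd.eq_union]
        exact measure_mono (closure_subset_add_of_isOpen_addSubgroup hK A)
    _ ≤ μ A₁ + μ K :=
        (measure_union_le _ _).trans <|
          add_le_add hd.measure_add_le hd.measure_add_le_measure_subgroup
    _ ≤ μ A + μ K := by gcongr; exact hd.eq_union ▸ subset_union_left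

theorem add_subset_interior_closure [μ.IsOpenPosMeasure]
    (hd : IsQuasiPeriodicDecomposition μ K A A₁ A₀) (hK : IsOpen (K : Set G)) :
    A₁ + (K : Set G) ⊆ interior (closure A) := by
  have hopen : IsOpen (A₁ + (K : Set G)) := hK.add_left
  refine interior_maximal ?_ hopen
  exact (hopen.subset_closure_of_measure_diff_eq_zero hd.measure_add_diff_eq_zero).trans
    (closure_mono (hd.eq_union ▸ subset_union_left))

theorem measure_le_interior_closure_add [VAddInvariantMeasure G G μ] [μ.IsOpenPosMeasure]
    (hd : IsQuasiPeriodicDecomposition μ K A A₁ A₀) (hK : IsOpen (K : Set G)) :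
    μ A ≤ μ (interior (closure A)) + μ K :=
  calc μ A ≤ μ A₁ + μ A₀ := hd.eq_union ▸ measure_union_le _ _
    _ ≤ μ (interior (closure A)) + μ K := by
        refine add_le_add (measure_mono ?_) hd.measure_le_measure_subgroup
        exact (subset_add_left A₁ K.zero_mem).trans (hd.add_subset_interior_closure hK)

end IsQuasiPeriodicDecomposition

theorem essentially_regular_of_small_quasi_periods_general
    {G : Type*} [AddCommGroup G] [TopologicalSpace G] [IsTopologicalAddGroup G]
    [MeasurableSpace G] [BorelSpace G]
    (μ : Measure G) [μ.IsAddHaarMeasure]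
    (A : Set G)
    (h : ∀ ε : ℝ≥0∞, 0 < ε → ∃ K : AddSubgroup G,
      IsCompact (K : Set G) ∧ IsOpen (K : Set G) ∧
      0 < μ (K : Set G) ∧ μ (K : Set G) < ε ∧
      ∃ A1 A0 : Set G, A = A1 ∪ A0 ∧ μ ((A1 + (K : Set G)) ∆ A1) = 0 ∧
        ∃ x : G, A0 ⊆ x +ᵥ (K : Set G)) :
    μ A = μ (closure A) ∧ μ A = μ (interior (closure A)) := by
  have small_error : ∀ ε : ℝ≥0∞, 0 < ε →
      μ (closure A) ≤ μ A + ε ∧ μ A ≤ μ (interior (closure A)) + ε := by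
    intro ε hε
    obtain ⟨K, -, hK, -, hKε, A₁, A₀, hA, hA₁, hA₀⟩ := h ε hε
    have hd : IsQuasiPeriodicDecomposition μ K A A₁ A₀ := ⟨hA, hA₁, hA₀⟩
    exact ⟨(hd.measure_closure_le_add hK).trans (by gcongr),
      (hd.measure_le_interior_closure_add hK).trans (by gcongr)⟩
  have hcl : μ A = μ (closure A) :=
    (measure_mono subset_closure).antisymm <| ENNReal.le_of_forall_pos_le_add fun ε hε _ ↦
      (small_error ε (by exact_mod_cast hε)).1
  have hint : μ A ≤ μ (interior (closure A)) :=
    ENNReal.le_of_forall_pos_le_add fun ε hε _ ↦ (small_error ε (by exact_mod_cast hε)).2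
  exact ⟨hcl, hint.antisymm (hcl ▸ measure_mono interior_subset)⟩

theorem essentially_regular_of_small_quasi_periods
    {G : Type*} [AddCommGroup G] [TopologicalSpace G] [IsTopologicalAddGroup G]
    [CompactSpace G] [MeasurableSpace G] [BorelSpace G]
    (μ : Measure G) [μ.IsAddHaarMeasure] (hμ : μ Set.univ = 1)
    (A : Set G) (hAm : MeasurableSet A)
    (h : ∀ ε : ℝ≥0∞, 0 < ε → ∃ K : AddSubgroup G,
      IsCompact (K : Set G) ∧ IsOpen (K : Set G) ∧
      0 < μ (K : Set G) ∧ μ (K : Set G) < ε ∧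
      ∃ A1 A0 : Set G, A = A1 ∪ A0 ∧ μ ((A1 + (K : Set G)) ∆ A1) = 0 ∧
        ∃ x : G, A0 ⊆ x +ᵥ (K : Set G)) :
    μ A = μ (closure A) ∧ μ A = μ (interior (closure A)) :=
  essentially_regular_of_small_quasi_periods_general μ A h
end

section
/- Let G = Z_7 be the group of 7-adic integers with Haar measure m, let C ⊆ Z be the set defined by the self-similar equation C = ({0,1} + 7Z) ∪ (2 + 7C), and let A be the closure of C in Z_7. Then m(A) = 1/3 and m(A + A) = 2/3 = m(A) + m(A), i.e., (A, A) is a sur-critical pair in Z_7. -/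
/-!
Reduction mod `p` cuts `ℤ_[p]` into `p` cosets of `pℤ_[p]`, each of Haar measure `1/p`, and
`x ↦ e + p * x` divides Haar measure by `p`, since Haar measure pulled back along it is again
Haar (with total mass `1/p`). Taking closures turns `7ℤ` into `7ℤ_[7]`, so `A` is the union of
the residue classes `{0, 1}` with `2 + 7A`, and then `A + A` is the union of the classes
`{0, 1, 2, 3}` with `4 + 7(A + A)`. A set `S` that is the disjoint union of `k` residue
classes and `e + pS` satisfies `μ S = k/p + μ S/p`, i.e. `μ S = k/(p - 1)`.
-/

open MeasureTheory Set Pointwise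
open scoped ENNReal

instance : Fact (Nat.Prime 7) := ⟨by norm_num⟩

theorem closure_finite_add {G : Type*} [TopologicalSpace G] [AddGroup G] [IsTopologicalAddGroup G]
    {D : Set G} (hD : D.Finite) (s : Set G) : closure (D + s) = D + closure s := by
  change closure (D +ᵥ s) = D +ᵥ closure s
  rw [← iUnion_vadd_set, ← iUnion_vadd_set, hD.closure_biUnion]
  simp_rw [closure_vadd]

theorem image_add_mul_eq_singleton_add {R : Type*} [Add R] [Mul R] (e q : R) (s : Set R) :
    (fun x => e + q * x) '' s = {e} + (q * ·) '' s := by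
  rw [singleton_add, image_image]

theorem image_mul_preimage_add {R : Type*} [CommRing R] (q g : R) (s : Set R) :
    (q * ·) '' ((g + ·) ⁻¹' s) = (q * g + ·) ⁻¹' ((q * ·) '' s) := by
  ext y
  constructor
  · rintro ⟨x, hx, rfl⟩
    exact ⟨g + x, hx, by ring⟩
  · rintro ⟨x, hx, hxy⟩
    refine ⟨x - g, by simpa using hx, ?_⟩
    simp only at hxy ⊢
    rw [mul_sub, hxy]
    ring

theorem AddMonoidHom.preimage_add_eq {F G H : Type*} [AddGroup G] [AddGroup H] [FunLike F G H]
    [AddMonoidHomClass F G H] (f : F) (s : Set H) (Y : Set G) :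
    f ⁻¹' s + Y = f ⁻¹' (s + f '' Y) := by
  ext x
  simp only [mem_add, mem_preimage, mem_image]
  constructor
  · rintro ⟨k, hk, y, hy, rfl⟩
    exact ⟨f k, hk, f y, ⟨y, hy, rfl⟩, (map_add f k y).symm⟩
  · rintro ⟨a, ha, _, ⟨y, hy, rfl⟩, hx⟩
    refine ⟨x + -y, ?_, y, hy, neg_add_cancel_right x y⟩
    rwa [map_add, map_neg, ← hx, add_neg_cancel_right]

theorem ENNReal.eq_div_sub_one_of_eq_div_add_div {x a b : ℝ≥0∞} (hx : x ≠ ∞) (hb : 1 < b)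
    (hb' : b ≠ ∞) (h : x = a / b + x / b) : x = a / (b - 1) := by
  have hb0 : b ≠ 0 := (zero_lt_one.trans hb).ne'
  have hmul : b * x = a + x := by
    conv_lhs => rw [h]
    rw [mul_add, ENNReal.mul_div_cancel hb0 hb', ENNReal.mul_div_cancel hb0 hb']
  rw [ENNReal.eq_div_iff (tsub_pos_of_lt hb).ne' (ENNReal.sub_ne_top hb'),
    ENNReal.sub_mul (fun _ _ => hx), one_mul, hmul, ENNReal.add_sub_cancel_right hx]

namespace PadicInt

variable {p : ℕ} [Fact p.Prime]

theorem range_mul_p_eq_preimage_toZMod_zero :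
    range ((p : ℤ_[p]) * ·) = toZMod ⁻¹' {0} := by
  ext x
  rw [mem_preimage, mem_singleton_iff, ← RingHom.mem_ker, ker_toZMod, maximalIdeal_eq_span_p,
    Ideal.mem_span_singleton, dvd_iff_exists_eq_mul_right]
  simp only [mem_range, eq_comm]

theorem add_range_mul_p_eq_preimage_toZMod (D : Set ℤ_[p]) :
    D + range ((p : ℤ_[p]) * ·) = toZMod ⁻¹' (toZMod '' D) := by
  rw [range_mul_p_eq_preimage_toZMod_zero, add_comm, AddMonoidHom.preimage_add_eq,
    singleton_zero, zero_add]

theorem preimage_toZMod_singleton (x : ℤ_[p]) :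
    toZMod ⁻¹' {toZMod x} = (-x + ·) ⁻¹' (toZMod ⁻¹' {0}) := by
  ext y
  simp only [mem_preimage, mem_singleton_iff, map_add, map_neg, neg_add_eq_zero]
  exact eq_comm

theorem toZMod_add_p_mul (e x : ℤ_[p]) : toZMod (e + (p : ℤ_[p]) * x) = toZMod e := by
  simp

theorem isClosedEmbedding_mul_p : Topology.IsClosedEmbedding ((p : ℤ_[p]) * ·) :=
  (continuous_const_mul _).isClosedEmbedding
    (mul_right_injective₀ (Nat.cast_ne_zero.2 (Fact.out : p.Prime).ne_zero))

theorem closure_image_range_intCast {X : Type*} [TopologicalSpace X] [T2Space X]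
    {f : ℤ_[p] → X} (hf : Continuous f) : closure (f '' range Int.cast) = range f := by
  rw [hf.isClosedMap.closure_image_eq_of_continuous hf, denseRange_intCast.closure_range,
    image_univ]

theorem closure_eq_of_eq_union {C D : Set ℤ_[p]} (hD : D.Finite) {e : ℤ_[p]}
    (hC : C = (D + ((p : ℤ_[p]) * ·) '' range Int.cast) ∪
      (fun x => e + (p : ℤ_[p]) * x) '' C) :
    closure C = toZMod ⁻¹' (toZMod '' D) ∪ (fun x => e + (p : ℤ_[p]) * x) '' closure C := by
  have hf : Continuous fun x : ℤ_[p] => e + (p : ℤ_[p]) * x := by fun_prop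
  conv_lhs => rw [hC]
  rw [closure_union, closure_finite_add hD, closure_image_range_intCast (continuous_const_mul _),
    add_range_mul_p_eq_preimage_toZMod, hf.isClosedMap.closure_image_eq_of_continuous hf]

theorem add_self_eq_of_eq_union {A : Set ℤ_[p]} (hA₀ : A.Nonempty) {T : Finset (ZMod p)}
    {e : ℤ_[p]} (hA : A = toZMod ⁻¹' T ∪ (fun x => e + (p : ℤ_[p]) * x) '' A) :
    A + A = toZMod ⁻¹' ↑(T + T ∪ (T + {toZMod e})) ∪
      (fun x => (e + e) + (p : ℤ_[p]) * x) '' (A + A) := by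
  set K := toZMod ⁻¹' (T : Set (ZMod p))
  set E := (fun x => e + (p : ℤ_[p]) * x) '' A
  have hKK : K + K = toZMod ⁻¹' ↑(T + T) := by
    rw [AddMonoidHom.preimage_add_eq, image_preimage_eq _ (ZMod.ringHom_surjective _),
      Finset.coe_add]
  have hKE : K + E = toZMod ⁻¹' ↑(T + {toZMod e}) := by
    have hE : toZMod '' E = {toZMod e} := by
      simp only [E, image_image, toZMod_add_p_mul]
      exact hA₀.image_const _
    rw [AddMonoidHom.preimage_add_eq, hE, Finset.coe_add, Finset.coe_singleton]
  have hEE : E + E = (fun x => (e + e) + (p : ℤ_[p]) * x) '' (A + A) := by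
    simp only [E, image_add_mul_eq_singleton_add]
    rw [add_add_add_comm, singleton_add_singleton]
    congr 1
    exact (image_add (AddMonoidHom.mulLeft (p : ℤ_[p]))).symm
  calc A + A = (K + K ∪ (K + E)) ∪ (E + K ∪ (E + E)) := by
        conv_lhs => rw [hA]
        rw [union_add, add_union, add_union]
    _ = _ := by
        rw [add_comm E K, hKK, hKE, hEE, Finset.coe_union, preimage_union]
        ext
        simp only [mem_union]
        tauto

section Measure

variable [MeasurableSpace ℤ_[p]] [BorelSpace ℤ_[p]]

theorem measurableSet_preimage_toZMod_zero : MeasurableSet (toZMod ⁻¹' {0} : Set ℤ_[p]) := by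
  rw [← range_mul_p_eq_preimage_toZMod_zero]
  exact isClosedEmbedding_mul_p.isClosed_range.measurableSet

theorem measurableSet_preimage_toZMod (T : Set (ZMod p)) :
    MeasurableSet (toZMod ⁻¹' T : Set ℤ_[p]) := by
  rw [← biUnion_preimage_singleton]
  refine .biUnion T.to_countable fun a _ => ?_
  obtain ⟨x, rfl⟩ := ZMod.ringHom_surjective toZMod a
  rw [preimage_toZMod_singleton]
  exact measurableSet_preimage_toZMod_zero.preimage (measurable_const_add _)

variable (μ : Measure ℤ_[p]) [IsProbabilityMeasure μ]

theorem measure_preimage_toZMod_zero [μ.IsAddLeftInvariant] :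
    μ (toZMod ⁻¹' {0}) = (p : ℝ≥0∞)⁻¹ := by
  let K := (toZMod : ℤ_[p] →+* ZMod p).toAddMonoidHom.ker
  have hindex : K.index = p := by
    rw [AddSubgroup.index_ker, AddMonoidHom.range_eq_top.2 (ZMod.ringHom_surjective _)]
    simp
  have h := AddSubgroup.index_mul_measure K measurableSet_preimage_toZMod_zero μ
  rw [hindex, measure_univ] at h
  exact ENNReal.eq_inv_of_mul_eq_one_left (by rwa [mul_comm] at h)

theorem measure_preimage_toZMod_singleton [μ.IsAddLeftInvariant] (a : ZMod p) :
    μ (toZMod ⁻¹' {a}) = (p : ℝ≥0∞)⁻¹ := by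
  obtain ⟨x, rfl⟩ := ZMod.ringHom_surjective toZMod a
  rw [preimage_toZMod_singleton, measure_preimage_add, measure_preimage_toZMod_zero]

theorem measure_preimage_toZMod [μ.IsAddLeftInvariant] (T : Finset (ZMod p)) :
    μ (toZMod ⁻¹' T) = T.card / p := by
  rw [← biUnion_preimage_singleton, Finset.set_biUnion_coe, measure_biUnion_finset
    (pairwiseDisjoint_fiber _ _) (fun a _ => measurableSet_preimage_toZMod _)]
  simp [measure_preimage_toZMod_singleton, div_eq_mul_inv]

theorem measure_image_mul_p [μ.IsAddHaarMeasure] (s : Set ℤ_[p]) :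
    μ (((p : ℤ_[p]) * ·) '' s) = μ s / p := by
  set ν := μ.comap ((p : ℤ_[p]) * ·)
  have hν (t : Set ℤ_[p]) : ν t = μ (((p : ℤ_[p]) * ·) '' t) :=
    isClosedEmbedding_mul_p.measurableEmbedding.comap_apply μ t
  have : IsFiniteMeasure ν := ⟨by rw [hν]; exact measure_lt_top _ _⟩
  have : ν.IsAddLeftInvariant := ⟨fun g => Measure.ext fun t ht => by
    rw [Measure.map_apply (measurable_const_add g) ht, hν, hν, image_mul_preimage_add,
      measure_preimage_add]⟩
  have hscalar : (ν.addHaarScalarFactor μ : ℝ≥0∞) = (p : ℝ≥0∞)⁻¹ := by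
    have h := congrArg (· univ) (Measure.isAddLeftInvariant_eq_smul ν μ)
    simp only [Measure.smul_apply, measure_univ, ENNReal.smul_def, smul_eq_mul, mul_one] at h
    rw [← h, hν, image_univ, range_mul_p_eq_preimage_toZMod_zero, measure_preimage_toZMod_zero]
  rw [← hν, Measure.isAddLeftInvariant_eq_smul ν μ, Measure.smul_apply, ENNReal.smul_def,
    smul_eq_mul, hscalar, ENNReal.div_eq_inv_mul]

theorem measure_eq_div_of_eq_union [μ.IsAddHaarMeasure] {S : Set ℤ_[p]} {T : Finset (ZMod p)}
    {e : ℤ_[p]} (he : toZMod e ∉ T)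
    (hS : S = toZMod ⁻¹' T ∪ (fun x => e + (p : ℤ_[p]) * x) '' S) :
    μ S = T.card / (p - 1 : ℕ) := by
  have hdisj :
      Disjoint (toZMod ⁻¹' (T : Set (ZMod p))) ((fun x => e + (p : ℤ_[p]) * x) '' S) := by
    rw [disjoint_right]
    rintro _ ⟨x, -, rfl⟩ hx
    rw [mem_preimage, toZMod_add_p_mul] at hx
    exact he hx
  have himage :
      (fun x => e + (p : ℤ_[p]) * x) '' S = (e + ·) '' (((p : ℤ_[p]) * ·) '' S) := by
    rw [image_image]
  have hrec : μ S = T.card / p + μ S / p := by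
    conv_lhs => rw [hS]
    rw [measure_union' hdisj (measurableSet_preimage_toZMod _), measure_preimage_toZMod, himage,
      image_add_left, measure_preimage_add, measure_image_mul_p]
  have hp : 1 < p := (Fact.out : p.Prime).one_lt
  rw [ENNReal.natCast_sub, Nat.cast_one]
  exact ENNReal.eq_div_sub_one_of_eq_div_add_div (measure_ne_top μ S) (by exact_mod_cast hp)
    (ENNReal.natCast_ne_top p) hrec

end Measure

end PadicInt

open PadicInt in
theorem padic_surcritical_example_general
    [MeasurableSpace ℤ_[7]] [BorelSpace ℤ_[7]]
    (μ : Measure ℤ_[7]) [μ.IsAddHaarMeasure] (hμ : μ Set.univ = 1)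
    (C : Set ℤ_[7])
    (hC : C = (({0, 1} : Set ℤ_[7]) + (fun n => 7 * n) '' Set.range (Int.cast : ℤ → ℤ_[7]))
        ∪ ((fun x => 2 + 7 * x) '' C))
    (A : Set ℤ_[7]) (hA : A = closure C) :
    μ A = 1 / 3 ∧ μ (A + A) = 2 / 3 ∧ μ (A + A) = μ A + μ A := by
  have : IsProbabilityMeasure μ := ⟨hμ⟩
  have hA' : A = toZMod ⁻¹' ↑({0, 1} : Finset (ZMod 7)) ∪ (fun x => 2 + 7 * x) '' A := by
    subst hA
    refine (closure_eq_of_eq_union (toFinite _) hC).trans ?_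
    simp [image_insert_eq]
  have hA₀ : (0 : ℤ_[7]) ∈ A := by rw [hA']; simp
  have hAA : A + A = toZMod ⁻¹' ↑({0, 1, 2, 3} : Finset (ZMod 7)) ∪
      (fun x => 4 + 7 * x) '' (A + A) := by
    have hT : ({0, 1} + {0, 1} ∪ ({0, 1} + {2}) : Finset (ZMod 7)) = {0, 1, 2, 3} := by decide
    refine (add_self_eq_of_eq_union ⟨0, hA₀⟩ hA').trans ?_
    rw [map_ofNat, hT, two_add_two_eq_four]
    rfl
  have hμA : μ A = 1 / 3 := by
    rw [measure_eq_div_of_eq_union μ (by rw [map_ofNat]; decide) hA',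
      show ({0, 1} : Finset (ZMod 7)).card = 2 from rfl, ENNReal.div_eq_div_iff] <;> norm_num
  have hμAA : μ (A + A) = 2 / 3 := by
    rw [measure_eq_div_of_eq_union μ (by rw [map_ofNat]; decide) hAA,
      show ({0, 1, 2, 3} : Finset (ZMod 7)).card = 4 from rfl, ENNReal.div_eq_div_iff] <;> norm_num
  refine ⟨hμA, hμAA, ?_⟩
  rw [hμA, hμAA, ENNReal.div_add_div_same]
  norm_num

theorem padic_surcritical_example
    [MeasurableSpace ℤ_[7]] [BorelSpace ℤ_[7]]
    (μ : Measure ℤ_[7]) [μ.IsAddHaarMeasure] (hμ : μ Set.univ = 1)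
    (C : Set ℤ_[7]) (hCZ : C ⊆ Set.range (Int.cast : ℤ → ℤ_[7]))
    (hC : C = (({0, 1} : Set ℤ_[7]) + (fun n => 7 * n) '' Set.range (Int.cast : ℤ → ℤ_[7]))
        ∪ ((fun x => 2 + 7 * x) '' C))
    (A : Set ℤ_[7]) (hA : A = closure C) :
    μ A = 1 / 3 ∧ μ (A + A) = 2 / 3 ∧ μ (A + A) = μ A + μ A :=
  padic_surcritical_example_general μ hμ C hC A hA
end
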